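/- arXiv:2303.03623 — 12 statements merged into one kernel-verified Lean document; each statement's English description precedes it below -/
import Mathlib

section
/- Let n ∈ ℕ, let a : ℕ → ℕ → ℝ, and let r be a nonzero real number. Then for every real number x, ∑_{i=0}^{n} ∑_{j=0}^{n−i} a(i,j)·(x/r)^i·((x·r+1)/(2r))^j = ∑_{k=0}^{n} Γ_k·x^k, where Γ_k = ∑_{i=0}^{k} ∑_{j=0}^{n−k} C(k−i+j, j) · a(i, k−i+j) / (2^{k−i+j} · r^{j+i}). -/
theorem stmt_1 (n : ℕ) (a : ℕ → ℕ → ℝ) (r : ℝ) (hr : r ≠ 0) (x : ℝ) :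
    ∑ i ∈ Finset.range (n + 1), ∑ j ∈ Finset.range (n - i + 1),
        a i j * (x / r) ^ i * ((x * r + 1) / (2 * r)) ^ j =
      ∑ k ∈ Finset.range (n + 1),
        (∑ i ∈ Finset.range (k + 1), ∑ j ∈ Finset.range (n - k + 1),
          (Nat.choose (k - i + j) j : ℝ) * a i (k - i + j) /
            (2 ^ (k - i + j) * r ^ (j + i))) * x ^ k := by
  classical
  set f : ℕ → ℕ → ℕ → ℝ := fun i m t =>
    (Nat.choose m t : ℝ) * a i m * x ^ (i + t) / (2 ^ m * r ^ (m - t + i)) with hf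
  set g : ℕ → ℕ → ℕ → ℝ := fun k i j =>
    (Nat.choose (k - i + j) j : ℝ) * a i (k - i + j) /
      (2 ^ (k - i + j) * r ^ (j + i)) * x ^ k with hg
  have h2 : (2 : ℝ) ≠ 0 := two_ne_zero
  have step1 : ∑ i ∈ Finset.range (n + 1), ∑ j ∈ Finset.range (n - i + 1),
      a i j * (x / r) ^ i * ((x * r + 1) / (2 * r)) ^ j
      = ∑ i ∈ Finset.range (n + 1), ∑ m ∈ Finset.range (n - i + 1),
          ∑ t ∈ Finset.range (m + 1), f i m t := by
    refine Finset.sum_congr rfl fun i _ => Finset.sum_congr rfl fun m _ => ?_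
    rw [div_pow (x * r + 1), add_pow, Finset.sum_div, Finset.mul_sum]
    refine Finset.sum_congr rfl fun t ht => ?_
    rw [Finset.mem_range, Nat.lt_succ_iff] at ht
    obtain ⟨u, rfl⟩ := Nat.exists_eq_add_of_le ht
    simp only [hf, Nat.add_sub_cancel_left, one_pow, mul_one]
    rw [mul_pow x r, mul_pow 2 r, div_pow x r, pow_add, pow_add, pow_add]
    field_simp
    ring
  have step2 : ∀ k, (∑ i ∈ Finset.range (k + 1), ∑ j ∈ Finset.range (n - k + 1),
        (Nat.choose (k - i + j) j : ℝ) * a i (k - i + j) /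
          (2 ^ (k - i + j) * r ^ (j + i))) * x ^ k
      = ∑ i ∈ Finset.range (k + 1), ∑ j ∈ Finset.range (n - k + 1), g k i j := by
    intro k; rw [Finset.sum_mul]
    exact Finset.sum_congr rfl fun i _ => (Finset.sum_mul ..)
  rw [step1]
  simp only [step2]
  set S := (Finset.range (n + 1)).sigma
    (fun i => (Finset.range (n - i + 1)).sigma fun m => Finset.range (m + 1)) with hS
  set T := (Finset.range (n + 1)).sigma
    (fun k => (Finset.range (k + 1)).sigma fun i => Finset.range (n - k + 1)) with hT
  have L1 : (∑ p ∈ S, f p.1 p.2.1 p.2.2)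
      = ∑ i ∈ Finset.range (n + 1), ∑ m ∈ Finset.range (n - i + 1),
          ∑ t ∈ Finset.range (m + 1), f i m t := by
    rw [hS, Finset.sum_sigma]
    exact Finset.sum_congr rfl fun i _ => Finset.sum_sigma ..
  have R1 : (∑ p ∈ T, g p.1 p.2.1 p.2.2)
      = ∑ k ∈ Finset.range (n + 1), ∑ i ∈ Finset.range (k + 1),
          ∑ j ∈ Finset.range (n - k + 1), g k i j := by
    rw [hT, Finset.sum_sigma]
    exact Finset.sum_congr rfl fun i _ => Finset.sum_sigma ..
  rw [← L1, ← R1]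
  refine Finset.sum_nbij' (fun p => ⟨p.1 + p.2.2, p.1, p.2.1 - p.2.2⟩)
    (fun q => ⟨q.2.1, q.1 - q.2.1 + q.2.2, q.1 - q.2.1⟩) ?_ ?_ ?_ ?_ ?_
  · rintro ⟨i, m, t⟩ hp
    simp only [hS, hT, Finset.mem_sigma, Finset.mem_range] at hp ⊢
    omega
  · rintro ⟨k, i, j⟩ hq
    simp only [hS, hT, Finset.mem_sigma, Finset.mem_range] at hq ⊢
    omega
  · rintro ⟨i, m, t⟩ hp
    simp only [hS, Finset.mem_sigma, Finset.mem_range] at hp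
    simp only [Sigma.mk.inj_iff, heq_eq_eq]
    exact ⟨trivial, by omega, by omega⟩
  · rintro ⟨k, i, j⟩ hq
    simp only [hT, Finset.mem_sigma, Finset.mem_range] at hq
    simp only [Sigma.mk.inj_iff, heq_eq_eq]
    exact ⟨by omega, trivial, by omega⟩
  · rintro ⟨i, m, t⟩ hp
    simp only [hS, Finset.mem_sigma, Finset.mem_range, Nat.lt_succ_iff] at hp
    obtain ⟨hi, hm, ht⟩ := hp
    obtain ⟨u, rfl⟩ := Nat.exists_eq_add_of_le ht
    simp only [hf, hg, Nat.add_sub_cancel_left]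
    rw [show (t + u).choose u = (t + u).choose t by
      rw [← Nat.choose_symm (by omega : t ≤ t + u), Nat.add_sub_cancel_left]]
    ring
end

section
/- Let n ≥ 1 be a natural number, let r be a nonzero real number, and let a : ℤ → ℤ → ℝ be a family with a(i,j) = 0 whenever i < 0 or j < 0 or i + j > n. For each k = 0, …, n set Γ_k(r) = ∑_{i=0}^{k} ∑_{j=0}^{n−k} C(k−i+j, j) · a(i, k−i+j) / (2^{k−i+j} · r^{j+i}). Then Γ_k(r) = 0 for every k = 0, …, n if and only if there exists a family c : ℤ → ℤ → ℝ such that (1) c(i,j) = 0 whenever i < 0 or j < 0 or i + j ≥ n, and (2) a(i,j) = r²·c(i−1,j) − 2r·c(i,j−1) + c(i,j) for all integers i, j ≥ 0. -/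
noncomputable def ddAux (a : ℤ → ℤ → ℝ) (r : ℝ) : ℕ → ℕ → ℝ
  | 0, 0 => a 0 0 - r ^ 2 * 0 + 2 * r * 0
  | (p+1), 0 => a (↑(p+1)) 0 - r ^ 2 * ddAux a r p 0 + 2 * r * 0
  | 0, (q+1) => a 0 (↑(q+1)) - r ^ 2 * 0 + 2 * r * ddAux a r 0 q
  | (p+1), (q+1) => a (↑(p+1)) (↑(q+1)) - r ^ 2 * ddAux a r p (q+1) + 2 * r * ddAux a r (p+1) q
  termination_by p q => p + q

noncomputable def ccAux (a : ℤ → ℤ → ℝ) (r : ℝ) : ℤ → ℤ → ℝ :=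
  fun i j => if 0 ≤ i ∧ 0 ≤ j then ddAux a r i.toNat j.toNat else 0

lemma ccAux_neg (a : ℤ → ℤ → ℝ) (r : ℝ) (i j : ℤ) (h : i < 0 ∨ j < 0) :
    ccAux a r i j = 0 := by
  unfold ccAux
  rw [if_neg]; omega

lemma ccAux_nat (a : ℤ → ℤ → ℝ) (r : ℝ) (p q : ℕ) :
    ccAux a r ↑p ↑q = ddAux a r p q := by
  unfold ccAux
  rw [if_pos (by omega)]
  simp

lemma ccAux_rec (a : ℤ → ℤ → ℝ) (r : ℝ) (p q : ℕ) :
    a ↑p ↑q = r ^ 2 * ccAux a r (↑p - 1) ↑q - 2 * r * ccAux a r ↑p (↑q - 1)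
      + ccAux a r ↑p ↑q := by
  have hneg : ∀ i j : ℤ, i < 0 ∨ j < 0 → ccAux a r i j = 0 := ccAux_neg a r
  match p, q with
  | 0, 0 =>
    rw [ccAux_nat, ddAux, hneg (↑(0:ℕ)-1) ↑(0:ℕ) (Or.inl (by simp)),
      hneg ↑(0:ℕ) (↑(0:ℕ)-1) (Or.inr (by simp))]
    norm_num
  | (p+1), 0 =>
    rw [ccAux_nat, ddAux, show (↑(p+1):ℤ) - 1 = ↑p from by push_cast; ring,
      ccAux_nat, hneg ↑(p+1) (↑(0:ℕ)-1) (Or.inr (by simp))]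
    norm_num
  | 0, (q+1) =>
    rw [ccAux_nat, ddAux, show (↑(q+1):ℤ) - 1 = ↑q from by push_cast; ring,
      ccAux_nat, hneg (↑(0:ℕ)-1) ↑(q+1) (Or.inl (by simp))]
    norm_num
  | (p+1), (q+1) =>
    rw [ccAux_nat, ddAux, show (↑(p+1):ℤ) - 1 = ↑p from by push_cast; ring,
      show (↑(q+1):ℤ) - 1 = ↑q from by push_cast; ring, ccAux_nat, ccAux_nat]
    ring

noncomputable def gg1 (k : ℕ) (r : ℝ) (c : ℤ → ℤ → ℝ) (i j : ℕ) : ℝ :=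
  (Nat.choose (k - i + j) j : ℝ) * (r ^ 2 * c (↑i - 1) ↑(k - i + j)) /
    (2 ^ (k - i + j) * r ^ (j + i))

noncomputable def gg2 (k : ℕ) (r : ℝ) (c : ℤ → ℤ → ℝ) (i j : ℕ) : ℝ :=
  (Nat.choose (k - i + j) j : ℝ) * (2 * r * c ↑i (↑(k - i + j) - 1)) /
    (2 ^ (k - i + j) * r ^ (j + i))

noncomputable def gg3 (k : ℕ) (r : ℝ) (c : ℤ → ℤ → ℝ) (i j : ℕ) : ℝ :=
  (Nat.choose (k - i + j) j : ℝ) * c ↑i ↑(k - i + j) /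
    (2 ^ (k - i + j) * r ^ (j + i))

lemma cell (k : ℕ) (r : ℝ) (hr : r ≠ 0) (c : ℤ → ℤ → ℝ)
    (hc : ∀ i j : ℤ, i < 0 ∨ j < 0 → c i j = 0) (i j : ℕ) (hik : i ≤ k) :
    gg2 k r c i j =
      (if i = k then 0 else gg1 k r c (i + 1) j) +
      (if j = 0 then 0 else gg3 k r c i (j - 1)) := by
  unfold gg1 gg2 gg3
  by_cases hik2 : i = k
  · subst hik2
    rw [if_pos rfl]
    by_cases hj : j = 0
    · subst hj
      rw [if_pos rfl, show i - i + 0 = 0 from by omega,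
        hc ↑i (((0:ℕ):ℤ) - 1) (Or.inr (by simp))]
      norm_num
    · obtain ⟨j', rfl⟩ : ∃ j', j = j' + 1 := ⟨j - 1, by omega⟩
      rw [if_neg (by omega), show i - i + (j' + 1) = j' + 1 from by omega,
        show (j' + 1) - 1 = j' from rfl, show i - i + j' = j' from by omega,
        show ((↑(j' + 1) : ℤ)) - 1 = ↑j' from by push_cast; ring]
      simp only [Nat.choose_self, Nat.cast_one]
      field_simp
      ring
  · rw [if_neg hik2]
    obtain ⟨u, rfl⟩ : ∃ u, k = i + u + 1 := ⟨k - i - 1, by omega⟩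
    by_cases hj : j = 0
    · subst hj
      rw [if_pos rfl, show i + u + 1 - i + 0 = u + 1 from by omega,
        show i + u + 1 - (i + 1) + 0 = u from by omega,
        show ((↑(u + 1) : ℤ)) - 1 = ↑u from by push_cast; ring,
        show ((↑(i + 1) : ℤ)) - 1 = ↑i from by push_cast; ring]
      simp only [Nat.choose_zero_right, Nat.cast_one]
      field_simp
      ring
    · obtain ⟨j', rfl⟩ : ∃ j', j = j' + 1 := ⟨j - 1, by omega⟩
      rw [if_neg (by omega),
        show i + u + 1 - i + (j' + 1) = (u + j' + 1) + 1 from by omega,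
        show i + u + 1 - (i + 1) + (j' + 1) = u + j' + 1 from by omega,
        show (j' + 1) - 1 = j' from rfl,
        show i + u + 1 - i + j' = u + j' + 1 from by omega,
        show ((↑(u + j' + 1 + 1) : ℤ)) - 1 = ↑(u + j' + 1) from by push_cast; ring,
        show ((↑(i + 1) : ℤ)) - 1 = ↑i from by push_cast; ring,
        Nat.choose_succ_succ (u + j' + 1) j']
      push_cast
      field_simp
      ring

lemma CI (n k : ℕ) (hk : k ≤ n) (r : ℝ) (hr : r ≠ 0) (c : ℤ → ℤ → ℝ)
    (hc : ∀ i j : ℤ, i < 0 ∨ j < 0 → c i j = 0) :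
    ∑ i ∈ Finset.range (k + 1), ∑ j ∈ Finset.range (n - k + 1),
      (Nat.choose (k - i + j) j : ℝ) *
        (r ^ 2 * c (↑i - 1) ↑(k - i + j) - 2 * r * c ↑i (↑(k - i + j) - 1) +
          c ↑i ↑(k - i + j)) /
        (2 ^ (k - i + j) * r ^ (j + i))
    = ∑ p ∈ Finset.range (k + 1),
        (Nat.choose (n - p) (k - p) : ℝ) * c ↑p ↑(n - p) /
          (2 ^ (n - p) * r ^ (n - k + p)) := by
  have hstep0 :
      ∑ i ∈ Finset.range (k + 1), ∑ j ∈ Finset.range (n - k + 1),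
        (Nat.choose (k - i + j) j : ℝ) *
          (r ^ 2 * c (↑i - 1) ↑(k - i + j) - 2 * r * c ↑i (↑(k - i + j) - 1) +
            c ↑i ↑(k - i + j)) /
          (2 ^ (k - i + j) * r ^ (j + i))
      = (∑ i ∈ Finset.range (k + 1), ∑ j ∈ Finset.range (n - k + 1), gg1 k r c i j)
        - (∑ i ∈ Finset.range (k + 1), ∑ j ∈ Finset.range (n - k + 1), gg2 k r c i j)
        + (∑ i ∈ Finset.range (k + 1), ∑ j ∈ Finset.range (n - k + 1), gg3 k r c i j) := by
    rw [← Finset.sum_sub_distrib, ← Finset.sum_add_distrib]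
    refine Finset.sum_congr rfl fun i _ => ?_
    rw [← Finset.sum_sub_distrib, ← Finset.sum_add_distrib]
    refine Finset.sum_congr rfl fun j _ => ?_
    unfold gg1 gg2 gg3
    ring
  have hS1 :
      ∑ i ∈ Finset.range (k + 1), ∑ j ∈ Finset.range (n - k + 1), gg1 k r c i j
      = ∑ i ∈ Finset.range k, ∑ j ∈ Finset.range (n - k + 1), gg1 k r c (i + 1) j := by
    rw [Finset.sum_range_succ']
    have h0 : ∑ j ∈ Finset.range (n - k + 1), gg1 k r c 0 j = 0 := by
      refine Finset.sum_eq_zero fun j _ => ?_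
      unfold gg1
      rw [show ((0:ℕ):ℤ) - 1 = -1 from by norm_num, hc (-1) _ (Or.inl (by norm_num))]
      ring
    rw [h0, add_zero]
  have hS3 :
      ∑ i ∈ Finset.range (k + 1), ∑ j ∈ Finset.range (n - k + 1), gg3 k r c i j
      = (∑ i ∈ Finset.range (k + 1), ∑ j ∈ Finset.range (n - k), gg3 k r c i j)
        + ∑ p ∈ Finset.range (k + 1),
            (Nat.choose (n - p) (k - p) : ℝ) * c ↑p ↑(n - p) /
              (2 ^ (n - p) * r ^ (n - k + p)) := by
    rw [← Finset.sum_add_distrib]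
    refine Finset.sum_congr rfl fun i hi => ?_
    rw [Finset.sum_range_succ]
    congr 1
    have hik : i ≤ k := by
      have := Finset.mem_range.mp hi; omega
    unfold gg3
    rw [show k - i + (n - k) = n - i from by omega,
      show Nat.choose (n - i) (n - k) = Nat.choose (n - i) (k - i) from by
        rw [show n - k = (n - i) - (k - i) from by omega]
        exact Nat.choose_symm (by omega)]
  have hS2 :
      ∑ i ∈ Finset.range (k + 1), ∑ j ∈ Finset.range (n - k + 1), gg2 k r c i j
      = (∑ i ∈ Finset.range k, ∑ j ∈ Finset.range (n - k + 1), gg1 k r c (i + 1) j)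
        + ∑ i ∈ Finset.range (k + 1), ∑ j ∈ Finset.range (n - k), gg3 k r c i j := by
    have hcell :
        ∑ i ∈ Finset.range (k + 1), ∑ j ∈ Finset.range (n - k + 1), gg2 k r c i j
        = (∑ i ∈ Finset.range (k + 1), ∑ j ∈ Finset.range (n - k + 1),
            (if i = k then 0 else gg1 k r c (i + 1) j))
          + ∑ i ∈ Finset.range (k + 1), ∑ j ∈ Finset.range (n - k + 1),
              (if j = 0 then 0 else gg3 k r c i (j - 1)) := by
      rw [← Finset.sum_add_distrib]
      refine Finset.sum_congr rfl fun i hi => ?_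
      rw [← Finset.sum_add_distrib]
      refine Finset.sum_congr rfl fun j _ => ?_
      exact cell k r hr c hc i j (by have := Finset.mem_range.mp hi; omega)
    rw [hcell]
    congr 1
    · rw [Finset.sum_range_succ]
      have h1 : ∑ j ∈ Finset.range (n - k + 1),
          (if k = k then (0:ℝ) else gg1 k r c (k + 1) j) = 0 := by simp
      rw [h1, add_zero]
      refine Finset.sum_congr rfl fun i hi => Finset.sum_congr rfl fun j _ => ?_
      rw [if_neg (by have := Finset.mem_range.mp hi; omega)]
    · refine Finset.sum_congr rfl fun i _ => ?_
      rw [Finset.sum_range_succ']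
      simp only [Nat.succ_ne_zero, if_false, Nat.add_sub_cancel, if_pos rfl, add_zero]
      simp
  rw [hstep0, hS1, hS2, hS3]
  ring

theorem stmt_4 (n : ℕ) (hn : 1 ≤ n) (r : ℝ) (hr : r ≠ 0) (a : ℤ → ℤ → ℝ)
    (ha : ∀ i j : ℤ, (i < 0 ∨ j < 0 ∨ i + j > (n : ℤ)) → a i j = 0) :
    (∀ k ≤ n, ∑ i ∈ Finset.range (k + 1), ∑ j ∈ Finset.range (n - k + 1),
        (Nat.choose (k - i + j) j : ℝ) * a i (k - i + j) /
          (2 ^ (k - i + j) * r ^ (j + i)) = 0) ↔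
      ∃ c : ℤ → ℤ → ℝ,
        (∀ i j : ℤ, (i < 0 ∨ j < 0 ∨ i + j ≥ (n : ℤ)) → c i j = 0) ∧
        (∀ i j : ℤ, 0 ≤ i → 0 ≤ j →
          a i j = r ^ 2 * c (i - 1) j - 2 * r * c i (j - 1) + c i j) := by
  constructor
  · intro hG
    have hrec2 : ∀ i j : ℤ, 0 ≤ i → 0 ≤ j →
        a i j = r ^ 2 * ccAux a r (i - 1) j - 2 * r * ccAux a r i (j - 1)
          + ccAux a r i j := by
      intro i j hi hj
      lift i to ℕ using hi
      lift j to ℕ using hj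
      exact ccAux_rec a r i j
    have hGam' : ∀ k ≤ n, ∑ p ∈ Finset.range (k + 1),
        (Nat.choose (n - p) (k - p) : ℝ) * ccAux a r ↑p ↑(n - p) /
          (2 ^ (n - p) * r ^ (n - k + p)) = 0 := by
      intro k hk
      rw [← CI n k hk r hr (ccAux a r) (ccAux_neg a r)]
      rw [← hG k hk]
      refine Finset.sum_congr rfl fun i hi => Finset.sum_congr rfl fun j _ => ?_
      have hik : i ≤ k := by have := Finset.mem_range.mp hi; omega
      rw [show ((k:ℤ) - ↑i + ↑j) = ((k - i + j : ℕ) : ℤ) from by omega,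
        hrec2 ↑i ↑(k - i + j) (Int.natCast_nonneg i) (Int.natCast_nonneg _)]
    have hdiag : ∀ k, k ≤ n → ccAux a r ↑k ↑(n - k) = 0 := by
      intro k
      induction k using Nat.strong_induction_on with
      | _ k ih =>
        intro hk
        have h := hGam' k hk
        rw [Finset.sum_range_succ] at h
        have hz : ∑ p ∈ Finset.range k,
            (Nat.choose (n - p) (k - p) : ℝ) * ccAux a r ↑p ↑(n - p) /
              (2 ^ (n - p) * r ^ (n - k + p)) = 0 := by
          refine Finset.sum_eq_zero fun p hp => ?_
          rw [ih p (Finset.mem_range.mp hp) (by have := Finset.mem_range.mp hp; omega),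
            mul_zero, zero_div]
        rw [hz, zero_add, Nat.sub_self, Nat.choose_zero_right, Nat.cast_one, one_mul] at h
        have hden : (2:ℝ) ^ (n - k) * r ^ (n - k + k) ≠ 0 :=
          mul_ne_zero (pow_ne_zero _ two_ne_zero) (pow_ne_zero _ hr)
        rcases div_eq_zero_iff.mp h with h' | h'
        · exact h'
        · exact absurd h' hden
    have hzero : ∀ d : ℕ, ∀ p q : ℕ, p + q = n + d → ccAux a r ↑p ↑q = 0 := by
      intro d
      induction d with
      | zero =>
        intro p q hpq
        have hq : q = n - p := by omega
        subst hq
        exact hdiag p (by omega)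
      | succ d ih =>
        intro p q hpq
        have hrec := ccAux_rec a r p q
        have ha0 : a ↑p ↑q = 0 := ha _ _ (Or.inr (Or.inr (by push_cast; omega)))
        have h1 : ccAux a r (↑p - 1) ↑q = 0 := by
          rcases Nat.eq_zero_or_pos p with h | h
          · subst h
            exact ccAux_neg a r _ _ (Or.inl (by norm_num))
          · obtain ⟨p', rfl⟩ : ∃ p', p = p' + 1 := ⟨p - 1, by omega⟩
            rw [show (↑(p' + 1):ℤ) - 1 = ↑p' from by push_cast; ring]
            exact ih p' q (by omega)
        have h2 : ccAux a r ↑p (↑q - 1) = 0 := by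
          rcases Nat.eq_zero_or_pos q with h | h
          · subst h
            exact ccAux_neg a r _ _ (Or.inr (by norm_num))
          · obtain ⟨q', rfl⟩ : ∃ q', q = q' + 1 := ⟨q - 1, by omega⟩
            rw [show (↑(q' + 1):ℤ) - 1 = ↑q' from by push_cast; ring]
            exact ih p q' (by omega)
        rw [ha0, h1, h2] at hrec
        linarith [hrec]
    refine ⟨ccAux a r, ?_, hrec2⟩
    intro i j hij
    by_cases hi : i < 0
    · exact ccAux_neg a r i j (Or.inl hi)
    by_cases hj : j < 0
    · exact ccAux_neg a r i j (Or.inr hj)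
    push_neg at hi hj
    have hn' : (n:ℤ) ≤ i + j := by
      rcases hij with h | h | h
      · omega
      · omega
      · exact h
    lift i to ℕ using hi
    lift j to ℕ using hj
    exact hzero (i + j - n) i j (by omega)
  · rintro ⟨c, h1, h2⟩ k hk
    have hc' : ∀ i j : ℤ, i < 0 ∨ j < 0 → c i j = 0 := fun i j h =>
      h1 i j (h.imp id Or.inl)
    have e1 : ∑ i ∈ Finset.range (k + 1), ∑ j ∈ Finset.range (n - k + 1),
        (Nat.choose (k - i + j) j : ℝ) * a i (k - i + j) /
          (2 ^ (k - i + j) * r ^ (j + i))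
        = ∑ i ∈ Finset.range (k + 1), ∑ j ∈ Finset.range (n - k + 1),
          (Nat.choose (k - i + j) j : ℝ) *
            (r ^ 2 * c (↑i - 1) ↑(k - i + j) - 2 * r * c ↑i (↑(k - i + j) - 1) +
              c ↑i ↑(k - i + j)) /
            (2 ^ (k - i + j) * r ^ (j + i)) := by
      refine Finset.sum_congr rfl fun i hi => Finset.sum_congr rfl fun j _ => ?_
      have hik : i ≤ k := by have := Finset.mem_range.mp hi; omega
      rw [show ((k:ℤ) - ↑i + ↑j) = ((k - i + j : ℕ) : ℤ) from by omega,
        h2 ↑i ↑(k - i + j) (Int.natCast_nonneg i) (Int.natCast_nonneg _)]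
    rw [e1, CI n k hk r hr c hc']
    refine Finset.sum_eq_zero fun p hp => ?_
    have hpk : p ≤ k := by have := Finset.mem_range.mp hp; omega
    rw [h1 ↑p ↑(n - p) (Or.inr (Or.inr (by push_cast; omega))), mul_zero, zero_div]
end

section
/- Let Q ∈ ℝ[X,Y], let r > 0, and let κ : ℝ → ℝ satisfy the regularity condition. Then Q(K(s,t), H(s,t)) = 0 for all s, t ∈ ℝ if and only if either (i) the polynomial r²·X − 2r·Y + 1 divides Q, or (ii) κ is identically zero and Q(0, 1/(2r)) = 0. -/
/-!
Every curvature point `(K, H)` of the tube lies on the line `r²K - 2rH + 1 = 0`. If `κ(s₀) ≠ 0`,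
then `t ↦ K(s₀, t)` is injective on `[0, π]`, so `Q` vanishes at infinitely many points of this
line and is therefore divisible by its equation. If `κ ≡ 0`, the only curvature point is
`(0, 1/(2r))`.
-/

open MvPolynomial

namespace MvPolynomial

variable {σ R : Type*} [CommRing R]

theorem dvd_sub_aeval (f : σ → MvPolynomial σ R) {d : MvPolynomial σ R}
    (hf : ∀ i, d ∣ X i - f i) (p : MvPolynomial σ R) : d ∣ p - aeval f p := by
  set I := Ideal.span {d}
  have hmk : (Ideal.Quotient.mkₐ R I).comp (aeval f) = Ideal.Quotient.mkₐ R I :=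
    algHom_ext fun i => by
      simpa [Ideal.Quotient.eq, I, Ideal.mem_span_singleton, dvd_sub_comm] using hf i
  rw [← Ideal.mem_span_singleton, ← Ideal.Quotient.eq]
  exact (AlgHom.congr_fun hmk p).symm

/-- Restricted to the graph `y = -(a x + c) / b`, `Q` becomes a one-variable polynomial with
infinitely many roots, hence zero; `dvd_sub_aeval` turns this into divisibility. -/
theorem dvd_of_infinite_zeros_on_line {K : Type*} [Field K] {a b c : K} (hb : b ≠ 0)
    {Q : MvPolynomial (Fin 2) K}
    (hQ : {x | ∃ y, a * x + b * y + c = 0 ∧ eval ![x, y] Q = 0}.Infinite) :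
    C a * X 0 + C b * X 1 + C c ∣ Q := by
  set g : Fin 2 → Polynomial K :=
    ![Polynomial.X, Polynomial.C (-a / b) * Polynomial.X + Polynomial.C (-c / b)]
  have heval (x : K) : (aeval g Q).eval x = eval ![x, -(a * x + c) / b] Q := by
    rw [← Polynomial.coe_aeval_eq_eval, ← AlgHom.comp_apply, comp_aeval]
    refine congrArg (eval · Q) ?_
    funext i
    fin_cases i <;> simp [g]
    field_simp
    ring
  have hrestrict : aeval g Q = 0 := by
    refine Polynomial.eq_zero_of_infinite_isRoot _ (hQ.mono ?_)
    rintro x ⟨y, hline, hxy⟩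
    have hy : y = -(a * x + c) / b := by field_simp; linear_combination hline
    simpa [Polynomial.IsRoot, heval, hy] using hxy
  have hgraph (i : Fin 2) :
      C a * X 0 + C b * X 1 + C c ∣ X i - Polynomial.aeval (X 0) (g i) := by
    fin_cases i
    · simp [g]
    · refine ⟨C b⁻¹, ?_⟩
      have hbinv : C b * C b⁻¹ = (1 : MvPolynomial (Fin 2) K) := by
        rw [← C_mul, mul_inv_cancel₀ hb, C_1]
      simp [g, div_eq_mul_inv]
      linear_combination (-X 1) * hbinv
  have hdvd := dvd_sub_aeval _ hgraph Q
  rwa [← comp_aeval_apply, hrestrict, map_zero, sub_zero] at hdvd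

end MvPolynomial

/-- The Gaussian and mean curvatures of the tube depend on `(s, t)` only through
`u = κ(s) cos t`. -/
noncomputable def tubeGaussCurvature (r u : ℝ) : ℝ := u / (r * (r * u - 1))

noncomputable def tubeMeanCurvature (r u : ℝ) : ℝ := (2 * r * u - 1) / (2 * r * (r * u - 1))

section TubeCurvatures

variable {r : ℝ}

theorem tubeCurvatures_linear_relation (hr : r ≠ 0) {u : ℝ} (hu : r * u - 1 ≠ 0) :
    r ^ 2 * tubeGaussCurvature r u - 2 * r * tubeMeanCurvature r u + 1 = 0 := by
  unfold tubeGaussCurvature tubeMeanCurvature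
  field_simp
  ring

theorem tubeGaussCurvature_zero : tubeGaussCurvature r 0 = 0 := by
  simp [tubeGaussCurvature]

theorem tubeMeanCurvature_zero : tubeMeanCurvature r 0 = 1 / (2 * r) := by
  simp [tubeMeanCurvature]

theorem injOn_tubeGaussCurvature (hr : r ≠ 0) :
    Set.InjOn (tubeGaussCurvature r) {u | r * u - 1 ≠ 0} := by
  intro u hu v hv huv
  unfold tubeGaussCurvature at huv
  rw [div_eq_div_iff (mul_ne_zero hr hu) (mul_ne_zero hr hv)] at huv
  exact mul_left_cancel₀ hr (by linear_combination -huv)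

end TubeCurvatures

theorem stmt_7 (Q : MvPolynomial (Fin 2) ℝ) (r : ℝ) (hr : 0 < r) (κ : ℝ → ℝ)
    (hreg : ∀ s t : ℝ, 1 - r * κ s * Real.cos t ≠ 0) :
    (∀ s t : ℝ,
        eval ![κ s * Real.cos t / (r * (r * κ s * Real.cos t - 1)),
          (2 * r * κ s * Real.cos t - 1) / (2 * r * (r * κ s * Real.cos t - 1))] Q = 0) ↔
      ((C (r ^ 2) * X 0 - C (2 * r) * X 1 + 1) ∣ Q ∨
        ((∀ s, κ s = 0) ∧ eval ![0, 1 / (2 * r)] Q = 0)) := by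
  have hpoint (s t : ℝ) : ![κ s * Real.cos t / (r * (r * κ s * Real.cos t - 1)),
      (2 * r * κ s * Real.cos t - 1) / (2 * r * (r * κ s * Real.cos t - 1))] =
      ![tubeGaussCurvature r (κ s * Real.cos t), tubeMeanCurvature r (κ s * Real.cos t)] := by
    simp only [tubeGaussCurvature, tubeMeanCurvature, mul_assoc]
  have hden (s t : ℝ) : r * (κ s * Real.cos t) - 1 ≠ 0 := by
    rw [← mul_assoc, ← neg_sub, neg_ne_zero]
    exact hreg s t
  have hline : C (r ^ 2) * X 0 - C (2 * r) * X 1 + 1 =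
      C (r ^ 2) * X 0 + C (-(2 * r)) * X 1 + (C 1 : MvPolynomial (Fin 2) ℝ) := by
    simp [sub_eq_add_neg]
  have hline_eval (s t : ℝ) : eval ![tubeGaussCurvature r (κ s * Real.cos t),
      tubeMeanCurvature r (κ s * Real.cos t)] (C (r ^ 2) * X 0 - C (2 * r) * X 1 + 1) = 0 := by
    simpa using tubeCurvatures_linear_relation hr.ne' (hden s t)
  simp_rw [hpoint]
  constructor
  · intro hvan
    by_cases hflat : ∀ s, κ s = 0
    · exact Or.inr ⟨hflat, by
        simpa [hflat, tubeGaussCurvature_zero, tubeMeanCurvature_zero] using hvan 0 0⟩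
    obtain ⟨s₀, hs₀⟩ := not_forall.1 hflat
    left
    rw [hline]
    refine dvd_of_infinite_zeros_on_line (neg_ne_zero.2 (by positivity)) ?_
    have hinj : Set.InjOn (fun t => tubeGaussCurvature r (κ s₀ * Real.cos t)) (Set.Icc 0 Real.pi) :=
      (injOn_tubeGaussCurvature hr.ne').comp
        ((mul_right_injective₀ hs₀).comp_injOn Real.injOn_cos) fun t _ => hden s₀ t
    refine ((Set.Icc_infinite Real.pi_pos).image hinj).mono ?_
    rintro _ ⟨t, -, rfl⟩
    exact ⟨_, by linear_combination tubeCurvatures_linear_relation hr.ne' (hden s₀ t), hvan s₀ t⟩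
  · rintro (⟨R, rfl⟩ | ⟨hflat, hzero⟩) s t
    · rw [eval_mul, hline_eval, zero_mul]
    · simpa [hflat, tubeGaussCurvature_zero, tubeMeanCurvature_zero] using hzero
end

section
/- Let r > 0 and let κ : ℝ → ℝ satisfy the regularity condition. Then r²·K(s,t) − 2r·H(s,t) + 1 = 0 for all s, t ∈ ℝ; that is, every regular Euclidean tubular surface is a linear Weingarten surface. -/
theorem stmt_9 (r : ℝ) (hr : 0 < r) (κ : ℝ → ℝ)
    (hreg : ∀ s t : ℝ, 1 - r * κ s * Real.cos t ≠ 0) (s t : ℝ) :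
    r ^ 2 * (κ s * Real.cos t / (r * (r * κ s * Real.cos t - 1))) -
        2 * r * ((2 * r * κ s * Real.cos t - 1) / (2 * r * (r * κ s * Real.cos t - 1))) + 1 = 0 := by
  have h1 : r * κ s * Real.cos t - 1 ≠ 0 := by
    have := hreg s t; intro h; apply this; linarith
  field_simp
  ring
end

section
/- Let r > 0, let κ : ℝ → ℝ satisfy the regularity condition, and let c > 0. Then 4·H(s,t)² − 2·K(s,t) = c² for all s, t ∈ ℝ if and only if κ is identically zero and r = 1/c. In other words, the only regular Euclidean tubular surfaces whose second fundamental form has constant length c are the right cylinders of radius 1/c. -/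
/-!
With `x = r κ(s) cos t` one has `4H² - 2K = f(x) / r²` for `f(x) = (2x² - 2x + 1) / (x - 1)²`.
Comparing `t = 0` with `t = π` gives `f(x) = f(-x)` for `x = r κ(s)`, and clearing denominators
this reads `4x³ = 0`; so `κ ≡ 0`, after which `4H² - 2K = 1 / r²`.
-/

open Real

-- At `r = 0` or `r k u = 1` both sides are `0`, by `x / 0 = 0`.
theorem tube_four_meanCurvature_sq_sub_two_gaussCurvature (r k u : ℝ) :
    4 * ((2 * r * k * u - 1) / (2 * r * (r * k * u - 1))) ^ 2 -
        2 * (k * u / (r * (r * k * u - 1))) =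
      (2 * (r * k * u) ^ 2 - 2 * (r * k * u) + 1) / (r * k * u - 1) ^ 2 / r ^ 2 := by
  rcases eq_or_ne r 0 with rfl | hr
  · simp
  rcases eq_or_ne (r * k * u - 1) 0 with hx | hx
  · simp [hx]
  field_simp
  ring

theorem eq_zero_of_ratio_eq_ratio_neg {x : ℝ} (h₁ : x ≠ 1) (h₂ : x ≠ -1)
    (h : (2 * x ^ 2 - 2 * x + 1) / (x - 1) ^ 2 =
      (2 * (-x) ^ 2 - 2 * (-x) + 1) / (-x - 1) ^ 2) :
    x = 0 := by
  have h₁' : x - 1 ≠ 0 := sub_ne_zero.mpr h₁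
  have h₂' : -x - 1 ≠ 0 := fun h ↦ h₂ (by linarith)
  field_simp at h
  have hcube : 4 * x ^ 3 = 0 := by linear_combination h
  simpa using hcube

theorem eq_one_div_of_one_div_sq_eq_sq {r c : ℝ} (hr : 0 < r) (hc : 0 < c)
    (h : 1 / r ^ 2 = c ^ 2) : r = 1 / c := by
  rw [one_div, ← inv_pow, pow_left_inj₀ (by positivity) hc.le two_ne_zero] at h
  rw [← h, one_div, inv_inv]

theorem stmt_11 (r : ℝ) (hr : 0 < r) (κ : ℝ → ℝ)
    (hreg : ∀ s t : ℝ, 1 - r * κ s * Real.cos t ≠ 0) (c : ℝ) (hc : 0 < c) :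
    (∀ s t : ℝ,
        4 * ((2 * r * κ s * Real.cos t - 1) / (2 * r * (r * κ s * Real.cos t - 1))) ^ 2 -
          2 * (κ s * Real.cos t / (r * (r * κ s * Real.cos t - 1))) = c ^ 2) ↔
      ((∀ s, κ s = 0) ∧ r = 1 / c) := by
  simp_rw [tube_four_meanCurvature_sq_sub_two_gaussCurvature]
  constructor
  · intro h
    have hκ : ∀ s, κ s = 0 := by
      intro s
      have hx : r * κ s = 0 := by
        refine eq_zero_of_ratio_eq_ratio_neg (fun h₁ ↦ hreg s 0 (by simp [h₁]))
          (fun h₂ ↦ hreg s π (by simp [h₂])) ?_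
        have h₀ := h s 0
        have hπ := h s π
        simp only [cos_zero, cos_pi, mul_one, mul_neg_one] at h₀ hπ
        exact (div_left_inj' (pow_ne_zero 2 hr.ne')).mp (h₀.trans hπ.symm)
      exact (mul_eq_zero.mp hx).resolve_left hr.ne'
    refine ⟨hκ, eq_one_div_of_one_div_sq_eq_sq hr hc ?_⟩
    simpa [hκ] using h 0 0
  · rintro ⟨hκ, rfl⟩ s t
    simp [hκ]
end

section
/- Let r > 0, let κ : ℝ → ℝ satisfy the regularity condition, and let c ∈ ℝ. Then H(s,t) = c for all s, t ∈ ℝ if and only if κ is identically zero and c = 1/(2r). In particular, there is no regular Euclidean tubular surface of constant mean curvature c ≤ 0, and for c > 0 the only ones are the right cylinders of radius 1/(2c). -/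
/-!
At `t = π / 2` the curvature term drops out, which forces `c = 1 / (2 r)`. Writing
`u = r κ(s) cos t`, the identity `H = 1 / (2 r)` is equivalent to `u = 0`, and `t = 0` then
gives `κ(s) = 0`.
-/

open Real

lemma div_two_mul_sub_one_eq_one_div_iff {r u : ℝ} (hr : r ≠ 0) :
    (2 * u - 1) / (2 * r * (u - 1)) = 1 / (2 * r) ↔ u = 0 := by
  constructor
  · intro h
    -- At `u = 1` the left side is the junk value `x / 0 = 0`, while `1 / (2 * r) ≠ 0`.
    have hu : u - 1 ≠ 0 := by
      rintro hu
      simp [hu, hr] at h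
    rw [div_eq_div_iff (by positivity) (by positivity)] at h
    have : 2 * r * u = 0 := by linear_combination h
    simpa [hr] using this
  · rintro rfl
    field_simp
    ring

theorem stmt_12_general (r : ℝ) (hr : 0 < r) (κ : ℝ → ℝ) (c : ℝ) :
    (∀ s t : ℝ,
        (2 * r * κ s * Real.cos t - 1) / (2 * r * (r * κ s * Real.cos t - 1)) = c) ↔
      ((∀ s, κ s = 0) ∧ c = 1 / (2 * r)) := by
  have key : ∀ s t, (2 * r * κ s * cos t - 1) / (2 * r * (r * κ s * cos t - 1)) = 1 / (2 * r) ↔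
      κ s * cos t = 0 := fun s t => by
    rw [show κ s * cos t = 0 ↔ r * κ s * cos t = 0 by simp [mul_assoc, hr.ne'],
      ← div_two_mul_sub_one_eq_one_div_iff hr.ne']
    ring_nf
  constructor
  · intro h
    have hc : c = 1 / (2 * r) := by
      rw [← h 0 (π / 2), key]
      simp
    refine ⟨fun s => ?_, hc⟩
    simpa using (key s 0).1 (hc ▸ h s 0)
  · rintro ⟨hκ, rfl⟩ s t
    simp [hκ]

theorem stmt_12 (r : ℝ) (hr : 0 < r) (κ : ℝ → ℝ)
    (hreg : ∀ s t : ℝ, 1 - r * κ s * Real.cos t ≠ 0) (c : ℝ) :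
    (∀ s t : ℝ,
        (2 * r * κ s * Real.cos t - 1) / (2 * r * (r * κ s * Real.cos t - 1)) = c) ↔
      ((∀ s, κ s = 0) ∧ c = 1 / (2 * r)) :=
  stmt_12_general r hr κ c
end

section
/- Let r > 0, let κ : ℝ → ℝ satisfy the regularity condition, and let c ∈ ℝ. Then K(s,t) = c for all s, t ∈ ℝ if and only if κ is identically zero and c = 0. In particular, the right cylinders are the only regular Euclidean tubular surfaces with constant Gaussian curvature. -/
theorem stmt_13 (r : ℝ) (hr : 0 < r) (κ : ℝ → ℝ)
    (hreg : ∀ s t : ℝ, 1 - r * κ s * Real.cos t ≠ 0) (c : ℝ) :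
    (∀ s t : ℝ, κ s * Real.cos t / (r * (r * κ s * Real.cos t - 1)) = c) ↔
      ((∀ s, κ s = 0) ∧ c = 0) := by
  constructor
  · intro h
    have hc : c = 0 := by
      have h0 := h 0 0
      have hpi := h 0 Real.pi
      have e0 : Real.cos 0 = 1 := Real.cos_zero
      have epi : Real.cos Real.pi = -1 := Real.cos_pi
      rw [e0] at h0; rw [epi] at hpi
      have d1 : r * (r * κ 0 * 1 - 1) ≠ 0 := by
        have := hreg 0 0; rw [e0] at this
        intro hd
        rcases mul_eq_zero.mp hd with h' | h'
        · exact hr.ne' h'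
        · apply this; linarith [sub_eq_zero.mp h']
      have d2 : r * (r * κ 0 * (-1) - 1) ≠ 0 := by
        have := hreg 0 Real.pi; rw [epi] at this
        intro hd
        rcases mul_eq_zero.mp hd with h' | h'
        · exact hr.ne' h'
        · apply this; linarith [sub_eq_zero.mp h']
      have h0' := (div_eq_iff d1).mp h0
      have hpi' := (div_eq_iff d2).mp hpi
      nlinarith [hr]
    subst hc
    refine ⟨fun s => ?_, rfl⟩
    have h0 := h s 0
    rw [Real.cos_zero] at h0
    have d1 : r * (r * κ s * 1 - 1) ≠ 0 := by
      have := hreg s 0; rw [Real.cos_zero] at this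
      intro hd
      rcases mul_eq_zero.mp hd with h' | h'
      · exact hr.ne' h'
      · apply this; linarith [sub_eq_zero.mp h']
    have := (div_eq_iff d1).mp h0
    linarith
  · rintro ⟨hk, hc⟩ s t
    rw [hk s, hc]
    simp
end

section
/- Let Q ∈ ℝ[X,Y], let r > 0, and let κ : ℝ → ℝ satisfy the hyperbolic regularity condition. Then Q(K(s,t), H(s,t)) = 0 for all s, t ∈ ℝ if and only if either (i) the polynomial (sinh² r)·X − 2(sinh r)·Y + 1 divides Q, or (ii) κ is identically zero and Q(0, 1/(2·sinh r)) = 0. -/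
open MvPolynomial

noncomputable def Tmap (a : ℝ) : MvPolynomial (Fin 2) ℝ →ₐ[ℝ] Polynomial ℝ :=
  aeval ![Polynomial.C (2/a) * Polynomial.X - Polynomial.C (1/a^2), Polynomial.X]

noncomputable def ψmap : MvPolynomial (Fin 1) ℝ →ₐ[ℝ] Polynomial ℝ :=
  aeval (fun _ => Polynomial.X)

lemma ψ_inj : Function.Injective (ψmap : MvPolynomial (Fin 1) ℝ → Polynomial ℝ) := by
  have h : ∀ p, Polynomial.aeval (X 0 : MvPolynomial (Fin 1) ℝ) (ψmap p) = p := by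
    intro p
    induction p using MvPolynomial.induction_on with
    | C c => simp [ψmap]
    | add p q hp hq => simp only [map_add, hp, hq]
    | mul_X p n hp =>
      have : n = 0 := Subsingleton.elim n 0
      subst this
      simp only [ψmap] at hp ⊢
      simp only [map_mul, aeval_X, Polynomial.aeval_X, hp]
  intro x y hxy
  have := congrArg (Polynomial.aeval (X 0 : MvPolynomial (Fin 1) ℝ)) hxy
  rwa [h, h] at this

lemma aux_psi_eval (a : ℝ) (Q : MvPolynomial (Fin 2) ℝ) :
    ψmap (Polynomial.eval (C (2/a) * X 0 - C (1/a^2)) (finSuccEquiv ℝ 1 Q)) = Tmap a Q := by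
  induction Q using MvPolynomial.induction_on with
  | C c => simp [finSuccEquiv_apply, ψmap, Tmap]
  | add p q hp hq => simp only [map_add, Polynomial.eval_add, hp, hq]
  | mul_X p n hp =>
    refine Fin.cases ?_ ?_ n
    · simp only [map_mul, finSuccEquiv_X_zero, Polynomial.eval_mul, Polynomial.eval_X, Tmap,
        aeval_X, Matrix.cons_val_zero] at hp ⊢
      rw [hp]
      simp [ψmap, Tmap]
    · intro j
      have : j = 0 := Subsingleton.elim j 0
      subst this
      simp only [map_mul, finSuccEquiv_X_succ, Polynomial.eval_mul, Polynomial.eval_C, Tmap,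
        aeval_X] at hp ⊢
      rw [hp]
      simp [ψmap, Tmap]

lemma aux_T_eval (a : ℝ) (Q : MvPolynomial (Fin 2) ℝ) (y : ℝ) :
    Polynomial.eval y (Tmap a Q) = eval ![2/a*y - 1/a^2, y] Q := by
  induction Q using MvPolynomial.induction_on with
  | C c => simp [Tmap]
  | add p q hp hq => simp [map_add, hp, hq]
  | mul_X p n hp =>
    fin_cases n <;>
    · simp only [map_mul, Tmap, aeval_X, eval_X, Polynomial.eval_mul, eval_mul,
        Matrix.cons_val_zero, Matrix.cons_val_one, Matrix.head_cons] at hp ⊢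
      rw [hp]; simp

lemma aux_dvd_iff (a : ℝ) (ha : a ≠ 0) (Q : MvPolynomial (Fin 2) ℝ) :
    (C (a^2) * X 0 - C (2*a) * X 1 + 1) ∣ Q ↔ Tmap a Q = 0 := by
  have e1 : a^2 * (2/a) = 2*a := by field_simp
  have e2 : a^2 * (1/a^2) = 1 := by field_simp
  set b : MvPolynomial (Fin 1) ℝ := C (2/a) * X 0 - C (1/a^2) with hb
  have hC : ∀ c : ℝ, finSuccEquiv ℝ 1 (C c) = Polynomial.C (C c) := by
    intro c; simp [finSuccEquiv_apply]
  have hkey : (C (a^2) : MvPolynomial (Fin 1) ℝ) * b = C (2*a) * X 0 - 1 := by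
    rw [hb, mul_sub, ← mul_assoc, ← C_mul, ← C_mul, e1, e2, C_1]
  have hφP : finSuccEquiv ℝ 1 (C (a^2) * X 0 - C (2*a) * X 1 + 1)
      = Polynomial.C (C (a^2)) * (Polynomial.X - Polynomial.C b) := by
    have h1 : (X 1 : MvPolynomial (Fin 2) ℝ) = X (Fin.succ 0) := rfl
    rw [h1, map_add, map_sub, map_mul, map_mul, hC, hC, finSuccEquiv_X_zero,
      finSuccEquiv_X_succ, map_one, mul_sub, ← Polynomial.C_mul, ← Polynomial.C_mul, hkey,
      map_sub, map_one]
    ring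
  have hunit : IsUnit (Polynomial.C (C (a^2) : MvPolynomial (Fin 1) ℝ)) := by
    rw [Polynomial.isUnit_C]
    exact (isUnit_iff_ne_zero.2 (pow_ne_zero 2 ha)).map (C : ℝ →+* MvPolynomial (Fin 1) ℝ)
  constructor
  · rintro ⟨R, rfl⟩
    rw [map_mul]
    have hTP : Tmap a (C (a^2) * X 0 - C (2*a) * X 1 + 1) = 0 := by
      have : Tmap a (C (a^2) * X 0 - C (2*a) * X 1 + 1)
          = Polynomial.C (a^2) * (Polynomial.C (2/a) * Polynomial.X - Polynomial.C (1/a^2))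
            - Polynomial.C (2*a) * Polynomial.X + 1 := by
        simp [Tmap, algebraMap_eq]
      rw [this, mul_sub, ← mul_assoc, ← Polynomial.C_mul, ← Polynomial.C_mul, e1, e2,
        Polynomial.C_1]
      ring
    rw [hTP, zero_mul]
  · intro hT
    have hroot : Polynomial.eval b (finSuccEquiv ℝ 1 Q) = 0 := by
      apply ψ_inj
      rw [map_zero, hb, aux_psi_eval, hT]
    have hdvd1 : (Polynomial.X - Polynomial.C b) ∣ finSuccEquiv ℝ 1 Q :=
      Polynomial.dvd_iff_isRoot.2 hroot
    have hdvd2 : finSuccEquiv ℝ 1 (C (a^2) * X 0 - C (2*a) * X 1 + 1) ∣ finSuccEquiv ℝ 1 Q := by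
      rw [hφP]
      exact (hunit.mul_left_dvd).2 hdvd1
    exact (map_dvd_iff (finSuccEquiv ℝ 1)).1 hdvd2

theorem stmt_14 (Q : MvPolynomial (Fin 2) ℝ) (r : ℝ) (hr : 0 < r) (κ : ℝ → ℝ)
    (hreg : ∀ s t : ℝ, Real.cosh r - κ s * Real.cos t * Real.sinh r ≠ 0) :
    (∀ s t : ℝ,
        eval ![-(κ s * Real.cos t) /
            ((Real.cosh r - κ s * Real.cos t * Real.sinh r) * Real.sinh r),
          (Real.cosh r - 2 * κ s * Real.cos t * Real.sinh r) /
            (2 * (Real.cosh r - κ s * Real.cos t * Real.sinh r) * Real.sinh r)] Q = 0) ↔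
      ((C (Real.sinh r ^ 2) * X 0 - C (2 * Real.sinh r) * X 1 + 1) ∣ Q ∨
        ((∀ s, κ s = 0) ∧ eval ![0, 1 / (2 * Real.sinh r)] Q = 0)) := by
  set a := Real.sinh r with ha_def
  set c := Real.cosh r with hc_def
  have ha : a ≠ 0 := ne_of_gt (Real.sinh_pos_iff.2 hr)
  have hc : (0:ℝ) < c := Real.cosh_pos r
  -- the point always lies on the line X = (2/a) Y - 1/a²
  have hline : ∀ s t : ℝ,
      -(κ s * Real.cos t) / ((c - κ s * Real.cos t * a) * a)
        = 2/a * ((c - 2 * κ s * Real.cos t * a) / (2 * (c - κ s * Real.cos t * a) * a))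
          - 1/a^2 := by
    intro s t
    have hξ : c - κ s * Real.cos t * a ≠ 0 := hreg s t
    field_simp
    ring
  have hpoint : ∀ s t : ℝ,
      eval ![-(κ s * Real.cos t) / ((c - κ s * Real.cos t * a) * a),
        (c - 2 * κ s * Real.cos t * a) / (2 * (c - κ s * Real.cos t * a) * a)] Q
      = Polynomial.eval
          ((c - 2 * κ s * Real.cos t * a) / (2 * (c - κ s * Real.cos t * a) * a)) (Tmap a Q) := by
    intro s t
    rw [hline s t, aux_T_eval]
  constructor
  · intro hvan
    by_cases hκ : ∀ s, κ s = 0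
    · right
      refine ⟨hκ, ?_⟩
      have harg1 : -(κ 0 * Real.cos 0) / ((c - κ 0 * Real.cos 0 * a) * a) = 0 := by
        simp [hκ 0]
      have harg2 : (c - 2 * κ 0 * Real.cos 0 * a) / (2 * (c - κ 0 * Real.cos 0 * a) * a)
          = 1 / (2 * a) := by
        rw [hκ 0]
        rw [show (2:ℝ) * (c - 0 * Real.cos 0 * a) * a = c * (2 * a) by ring,
          show c - 2 * 0 * Real.cos 0 * a = c by ring, ← div_div, div_self (ne_of_gt hc)]
      have h0 := hvan 0 0
      rwa [harg1, harg2] at h0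
    · left
      push_neg at hκ
      obtain ⟨s₀, hk⟩ := hκ
      rw [aux_dvd_iff a ha Q]
      apply Polynomial.eq_zero_of_infinite_isRoot
      set g : ℝ → ℝ := fun u => (c - 2 * κ s₀ * u * a) / (2 * (c - κ s₀ * u * a) * a) with hg
      have himg : ∀ u ∈ Set.Icc (-1:ℝ) 1, (Tmap a Q).IsRoot (g u) := by
        intro u hu
        have hcos : Real.cos (Real.arccos u) = u := Real.cos_arccos hu.1 hu.2
        have := hvan s₀ (Real.arccos u)
        rw [hpoint s₀ (Real.arccos u)] at this
        rw [hg]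
        simpa [Polynomial.IsRoot, hcos] using this
      have hξ' : ∀ u ∈ Set.Icc (-1:ℝ) 1, c - κ s₀ * u * a ≠ 0 := by
        intro u hu
        have := hreg s₀ (Real.arccos u)
        rwa [Real.cos_arccos hu.1 hu.2] at this
      have hginj : Set.InjOn g (Set.Icc (-1:ℝ) 1) := by
        intro u1 h1 u2 h2 heq
        have hd1 : 2 * (c - κ s₀ * u1 * a) * a ≠ 0 :=
          mul_ne_zero (mul_ne_zero two_ne_zero (hξ' u1 h1)) ha
        have hd2 : 2 * (c - κ s₀ * u2 * a) * a ≠ 0 :=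
          mul_ne_zero (mul_ne_zero two_ne_zero (hξ' u2 h2)) ha
        rw [hg] at heq
        simp only at heq
        rw [div_eq_div_iff hd1 hd2] at heq
        have key : κ s₀ * a^2 * c * (u1 - u2) = 0 := by linear_combination (-(1:ℝ)/2) * heq
        have hne : κ s₀ * a^2 * c ≠ 0 :=
          mul_ne_zero (mul_ne_zero hk (pow_ne_zero 2 ha)) (ne_of_gt hc)
        have := (mul_eq_zero.1 key).resolve_left hne
        linarith [sub_eq_zero.1 this]
      have hsub : g '' Set.Icc (-1:ℝ) 1 ⊆ {x | (Tmap a Q).IsRoot x} := by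
        rintro x ⟨u, hu, rfl⟩
        exact himg u hu
      exact Set.Infinite.mono hsub ((Set.infinite_image_iff hginj).2 (Set.Icc_infinite (by norm_num)))
  · rintro (hdvd | ⟨hκ, hQ⟩) <;> intro s t
    · rw [hpoint s t, (aux_dvd_iff a ha Q).1 hdvd, Polynomial.eval_zero]
    · have harg1 : -(κ s * Real.cos t) / ((c - κ s * Real.cos t * a) * a) = 0 := by
        simp [hκ s]
      have harg2 : (c - 2 * κ s * Real.cos t * a) / (2 * (c - κ s * Real.cos t * a) * a)
          = 1 / (2 * a) := by
        rw [hκ s]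
        rw [show (2:ℝ) * (c - 0 * Real.cos t * a) * a = c * (2 * a) by ring,
          show c - 2 * 0 * Real.cos t * a = c by ring, ← div_div, div_self (ne_of_gt hc)]
      rwa [harg1, harg2]
end

section
/- Let r > 0 and let κ : ℝ → ℝ satisfy the hyperbolic regularity condition. Then (sinh² r)·K(s,t) − 2(sinh r)·H(s,t) + 1 = 0 for all s, t ∈ ℝ; that is, every regular tubular surface in hyperbolic 3-space is a linear Weingarten surface. -/
theorem sq_mul_sub_two_mul_add_one_eq_zero {𝕜 : Type*} [Field 𝕜] [NeZero (2 : 𝕜)] {c σ x : 𝕜}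
    (hσ : σ ≠ 0) (hξ : c - x * σ ≠ 0) :
    σ ^ 2 * (-x / ((c - x * σ) * σ)) - 2 * σ * ((c - 2 * x * σ) / (2 * (c - x * σ) * σ)) + 1
      = 0 := by
  have hK : σ ^ 2 * (-x / ((c - x * σ) * σ)) = -(x * σ) / (c - x * σ) := by
    field_simp
  have hH : 2 * σ * ((c - 2 * x * σ) / (2 * (c - x * σ) * σ)) = (c - 2 * x * σ) / (c - x * σ) := by
    field_simp
  rw [hK, hH, div_sub_div_same, div_add_one hξ]
  exact div_eq_zero_iff.2 (Or.inl (by ring))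

theorem stmt_15 (r : ℝ) (hr : 0 < r) (κ : ℝ → ℝ)
    (hreg : ∀ s t : ℝ, Real.cosh r - κ s * Real.cos t * Real.sinh r ≠ 0) (s t : ℝ) :
    Real.sinh r ^ 2 *
        (-(κ s * Real.cos t) /
          ((Real.cosh r - κ s * Real.cos t * Real.sinh r) * Real.sinh r)) -
      2 * Real.sinh r *
        ((Real.cosh r - 2 * κ s * Real.cos t * Real.sinh r) /
          (2 * (Real.cosh r - κ s * Real.cos t * Real.sinh r) * Real.sinh r)) + 1 = 0 := by
  rw [mul_assoc 2 (κ s)]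
  exact sq_mul_sub_two_mul_add_one_eq_zero (Real.sinh_ne_zero.2 hr.ne') (hreg s t)
end

section
/- Let Q ∈ ℝ[X,Y], let r > 0, fix signs ε, ε_B, δ ∈ {−1, 1}, let μ : ℝ → ℝ be one of the functions t ↦ δ·cos t, t ↦ δ·cosh t, t ↦ sinh t, and let κ : ℝ → ℝ satisfy the Lorentzian regularity condition. Then Q(K(s,t), H(s,t)) = 0 for all s, t ∈ ℝ if and only if either (i) the polynomial r²·X − 2r·Y + ε divides Q, or (ii) κ is identically zero and Q(0, ε/(2r)) = 0. -/
/-!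
Every point `(K, H)` of the tube lies on the line `r²K - 2rH + ε = 0`, which gives the backward
implication (for `κ ≡ 0` the point is the constant `(0, ε / 2r)`). Conversely, if `κ s₀ ≠ 0`, then
`t ↦ (K, H)(s₀, t)` is a Möbius function of `μ t`, hence injective, and `μ` takes infinitely many
values; so `Q` vanishes at infinitely many points of that line. Viewing `Q` as a polynomial in `Y`
over `ℝ[X]`, the line is `Y = g(X)` and `Y - g(X)` divides `Q` because `Q(X, g(X))` has infinitely
many roots.
-/

open MvPolynomial

open Polynomial Polynomial.Bivariate in
theorem MvPolynomial.eval_eq_evalEval_symm_equivMvPolynomial {R : Type*} [CommSemiring R]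
    (v : Fin 2 → R) (Q : MvPolynomial (Fin 2) R) :
    eval v Q = ((equivMvPolynomial R).symm Q).evalEval (v 0) (v 1) := by
  have : (aevalAeval (R := R) (v 0) (v 1)).comp (equivMvPolynomial R).symm.toAlgHom = aeval v := by
    ext i; fin_cases i <;> simp
  rw [← coe_aevalAeval_eq_evalEval, ← coe_aeval_eq_eval, ← this]
  rfl

open Polynomial in
theorem Polynomial.eval_eval_eq_evalEval {R : Type*} [CommSemiring R] (p : R[X][X]) (g : R[X])
    (x : R) : (p.eval g).eval x = p.evalEval x (g.eval x) := by
  rw [← coe_evalRingHom, eval, hom_eval₂, RingHom.comp_id, eval₂_evalRingHom, coe_evalRingHom]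

section Line

variable {k : Type*} [Field k] {a b c : k}

open Polynomial Polynomial.Bivariate in
theorem MvPolynomial.symm_equivMvPolynomial_linear (hb : b ≠ 0) :
    (equivMvPolynomial k).symm (C a * X 0 - C b * X 1 + C c) =
      .C (.C (-b)) * (.X - .C (.C b⁻¹ * (.C a * .X + .C c))) := by
  have hCb : (.C (.C b) * .C (.C b⁻¹) : k[X][X]) = 1 := by
    rw [← map_mul, ← map_mul, mul_inv_cancel₀ hb, map_one, map_one]
  simp only [map_add, map_sub, map_mul, equivMvPolynomial_symm_C, equivMvPolynomial_symm_X_0,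
    equivMvPolynomial_symm_X_1, map_neg]
  linear_combination -(.C (.C a) * .C .X + .C (.C c) : k[X][X]) * hCb

theorem MvPolynomial.eval_one_eq_of_eval_linear_eq_zero (hb : b ≠ 0) {v : Fin 2 → k}
    (hv : eval v (C a * X 0 - C b * X 1 + C c) = 0) : v 1 = b⁻¹ * (a * v 0 + c) := by
  simp only [map_add, map_sub, map_mul, eval_C, eval_X] at hv
  field_simp
  linear_combination -hv

open Polynomial Polynomial.Bivariate in
theorem MvPolynomial.linear_dvd_of_infinite_zeros_on_line (hb : b ≠ 0)
    {Q : MvPolynomial (Fin 2) k} {S : Set (Fin 2 → k)} (hS : S.Infinite)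
    (hSline : ∀ v ∈ S, eval v (C a * X 0 - C b * X 1 + C c) = 0)
    (hQ : ∀ v ∈ S, eval v Q = 0) : C a * X 0 - C b * X 1 + C c ∣ Q := by
  set g : k[X] := .C b⁻¹ * (.C a * .X + .C c)
  have hgv : ∀ v ∈ S, v 1 = g.eval (v 0) := fun v hv => by
    simpa [g] using eval_one_eq_of_eval_linear_eq_zero hb (hSline v hv)
  have hinj : S.InjOn (· 0) := fun v hv w hw h0 => by
    ext i; fin_cases i
    · exact h0
    · simp only [Fin.mk_one, hgv v hv, hgv w hw]; exact congrArg g.eval h0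
  have hunit : IsUnit (.C (.C (-b)) : k[X][X]) :=
    ((neg_ne_zero.mpr hb).isUnit.map Polynomial.C).map Polynomial.C
  rw [← map_dvd_iff (equivMvPolynomial k).symm, symm_equivMvPolynomial_linear hb,
    hunit.mul_left_dvd, dvd_iff_isRoot]
  refine eq_zero_of_infinite_isRoot _ ((hS.image hinj).mono ?_)
  rintro _ ⟨v, hv, rfl⟩
  show IsRoot _ (v 0)
  rw [IsRoot.def, eval_eval_eq_evalEval, ← hgv v hv, ← eval_eq_evalEval_symm_equivMvPolynomial]
  exact hQ v hv

end Line

-- The point `(K, H)` of the tube at parameters where `κ s = k` and `μ t = m`.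
noncomputable def tubeCurvatures (r ε εB k m : ℝ) : Fin 2 → ℝ :=
  ![ε * εB * k * m / (r * (1 + εB * r * k * m)),
    ε * (2 * εB * r * k * m + 1) / (2 * r * (1 + εB * r * k * m))]

section TubeCurvatures

variable {r ε εB : ℝ}

theorem tubeCurvatures_zero_left (m : ℝ) : tubeCurvatures r ε εB 0 m = ![0, ε / (2 * r)] := by
  simp [tubeCurvatures]

theorem eval_tubeCurvatures_linear (hr : r ≠ 0) {k m : ℝ} (hkm : 1 + εB * r * k * m ≠ 0) :
    eval (tubeCurvatures r ε εB k m) (C (r ^ 2) * X 0 - C (2 * r) * X 1 + C ε) = 0 := by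
  simp only [tubeCurvatures, map_add, map_sub, map_mul, eval_C, eval_X, Matrix.cons_val_zero,
    Matrix.cons_val_one]
  have hkm' : 1 + r * εB * k * m ≠ 0 := by rwa [mul_comm r εB]
  field_simp
  ring

theorem tubeCurvatures_injOn (hr : r ≠ 0) (hε : ε ≠ 0) (hεB : εB ≠ 0) {k : ℝ} (hk : k ≠ 0) :
    {m | 1 + εB * r * k * m ≠ 0}.InjOn (tubeCurvatures r ε εB k) := fun m hm n hn hmn => by
  have hH := congrFun hmn 1
  simp only [tubeCurvatures, Matrix.cons_val_one, Matrix.cons_val_zero] at hH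
  rw [div_eq_div_iff (mul_ne_zero (by positivity) hm) (mul_ne_zero (by positivity) hn)] at hH
  have : 2 * r ^ 2 * ε * εB * k * (m - n) = 0 := by linear_combination hH
  simpa [hr, hε, hεB, hk, sub_eq_zero] using this

end TubeCurvatures

theorem infinite_range_const_mul {α M : Type*} [Mul M] [Zero M] [IsLeftCancelMulZero M]
    {f : α → M} (hf : (Set.range f).Infinite) {δ : M} (hδ : δ ≠ 0) :
    (Set.range fun t => δ * f t).Infinite := by
  rw [Set.range_comp' (δ * ·) f]
  exact hf.image (mul_right_injective₀ hδ).injOn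

theorem infinite_range_cosh : (Set.range Real.cosh).Infinite :=
  ((Set.Ici_infinite 0).image Real.cosh_strictMonoOn.injOn).mono (Set.image_subset_range _ _)

theorem infinite_range_of_profile {δ : ℝ} (hδ : δ ≠ 0) {μ : ℝ → ℝ}
    (hμ : (∀ t, μ t = δ * Real.cos t) ∨ (∀ t, μ t = δ * Real.cosh t) ∨ (∀ t, μ t = Real.sinh t)) :
    (Set.range μ).Infinite := by
  rcases hμ with h | h | h <;> rw [funext h]
  · exact infinite_range_const_mul Real.range_cos_infinite hδ
  · exact infinite_range_const_mul infinite_range_cosh hδ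
  · exact Real.sinh_surjective.range_eq ▸ Set.infinite_univ

theorem stmt_16 (Q : MvPolynomial (Fin 2) ℝ) (r : ℝ) (hr : 0 < r)
    (ε εB δ : ℝ) (hε : ε = -1 ∨ ε = 1) (hεB : εB = -1 ∨ εB = 1) (hδ : δ = -1 ∨ δ = 1)
    (μ : ℝ → ℝ)
    (hμ : (∀ t, μ t = δ * Real.cos t) ∨ (∀ t, μ t = δ * Real.cosh t) ∨
      (∀ t, μ t = Real.sinh t))
    (κ : ℝ → ℝ) (hreg : ∀ s t : ℝ, 1 + εB * r * κ s * μ t ≠ 0) :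
    (∀ s t : ℝ,
        eval ![ε * εB * κ s * μ t / (r * (1 + εB * r * κ s * μ t)),
          ε * (2 * εB * r * κ s * μ t + 1) / (2 * r * (1 + εB * r * κ s * μ t))] Q = 0) ↔
      ((C (r ^ 2) * X 0 - C (2 * r) * X 1 + C ε) ∣ Q ∨
        ((∀ s, κ s = 0) ∧ eval ![0, ε / (2 * r)] Q = 0)) := by
  have hε0 : ε ≠ 0 := by rcases hε with rfl | rfl <;> norm_num
  have hεB0 : εB ≠ 0 := by rcases hεB with rfl | rfl <;> norm_num
  have hδ0 : δ ≠ 0 := by rcases hδ with rfl | rfl <;> norm_num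
  change (∀ s t, eval (tubeCurvatures r ε εB (κ s) (μ t)) Q = 0) ↔ _
  constructor
  · intro hQ
    by_cases hκ : ∀ s, κ s = 0
    · exact .inr ⟨hκ, by simpa [hκ, tubeCurvatures_zero_left] using hQ 0 0⟩
    obtain ⟨s, hs⟩ := not_forall.mp hκ
    have hS : (Set.range fun t => tubeCurvatures r ε εB (κ s) (μ t)).Infinite := by
      rw [Set.range_comp' (tubeCurvatures r ε εB (κ s)) μ]
      refine (infinite_range_of_profile hδ0 hμ).image
        ((tubeCurvatures_injOn hr.ne' hε0 hεB0 hs).mono ?_)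
      rintro _ ⟨t, rfl⟩
      exact hreg s t
    refine .inl (linear_dvd_of_infinite_zeros_on_line (by positivity) hS ?_ ?_)
    · rintro _ ⟨t, rfl⟩
      exact eval_tubeCurvatures_linear hr.ne' (hreg s t)
    · rintro _ ⟨t, rfl⟩
      exact hQ s t
  · rintro (⟨R, rfl⟩ | ⟨hκ, hQ0⟩) s t
    · rw [map_mul, eval_tubeCurvatures_linear hr.ne' (hreg s t), zero_mul]
    · rwa [hκ s, tubeCurvatures_zero_left]
end

section
/- Let r > 0, fix signs ε, ε_B ∈ {−1, 1}, and let μ, κ : ℝ → ℝ be functions satisfying the Lorentzian regularity condition 1 + ε_B·r·κ(s)·μ(t) ≠ 0 for all s, t ∈ ℝ. Then r²·K(s,t) − 2r·H(s,t) + ε = 0 for all s, t ∈ ℝ; that is, every non-degenerate regular tubular surface in Lorentzian 3-space is a linear Weingarten surface. -/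
theorem stmt_18_general (r : ℝ) (hr : 0 < r) (ε εB : ℝ) (μ κ : ℝ → ℝ)
    (hreg : ∀ s t : ℝ, 1 + εB * r * κ s * μ t ≠ 0) (s t : ℝ) :
    r ^ 2 * (ε * εB * κ s * μ t / (r * (1 + εB * r * κ s * μ t))) -
        2 * r * (ε * (2 * εB * r * κ s * μ t + 1) / (2 * r * (1 + εB * r * κ s * μ t))) +
      ε = 0 := by
  -- `field_simp` only cancels the denominator once it sees it in its own normal form `r * εB * ⋯`.
  have hD : 1 + r * εB * κ s * μ t ≠ 0 := by rw [mul_comm r εB]; exact hreg s t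
  field_simp
  ring

theorem stmt_18 (r : ℝ) (hr : 0 < r) (ε εB : ℝ)
    (hε : ε = -1 ∨ ε = 1) (hεB : εB = -1 ∨ εB = 1) (μ κ : ℝ → ℝ)
    (hreg : ∀ s t : ℝ, 1 + εB * r * κ s * μ t ≠ 0) (s t : ℝ) :
    r ^ 2 * (ε * εB * κ s * μ t / (r * (1 + εB * r * κ s * μ t))) -
        2 * r * (ε * (2 * εB * r * κ s * μ t + 1) / (2 * r * (1 + εB * r * κ s * μ t))) +
      ε = 0 :=
  stmt_18_general r hr ε εB μ κ hreg s t
end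

section
/- Let Q ∈ ℝ[X,Y], let r > 0, and let κ : ℝ → ℝ satisfy the regularity condition. Then Q(k₁(s,t), k₂) = 0 for all s, t ∈ ℝ if and only if either (i) the polynomial Y − 1/r divides Q, or (ii) κ is identically zero and Q(0, 1/r) = 0. -/
open MvPolynomial

private lemma key_dvd (a : ℝ) (Q : MvPolynomial (Fin 2) ℝ) :
    (X 1 - C a) ∣ (Q - aeval ![X 0, C a] Q) := by
  set f : Fin 2 → MvPolynomial (Fin 2) ℝ := ![X 0, C a] with hf
  induction Q using MvPolynomial.induction_on with
  | C c => simp [aeval_C, algebraMap_eq]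
  | add p q hp hq =>
      have h : p + q - aeval f (p + q)
          = (p - aeval f p) + (q - aeval f q) := by
        rw [map_add]; ring
      rw [h]; exact dvd_add hp hq
  | mul_X p i hp =>
      have h1 : p * X i - aeval f (p * X i)
          = (p - aeval f p) * X i + aeval f p * ((X i : MvPolynomial (Fin 2) ℝ) - aeval (R := ℝ) f (X i)) := by
        rw [map_mul]; ring
      rw [h1]
      refine dvd_add (hp.mul_right _) (Dvd.dvd.mul_left ?_ _)
      fin_cases i
      · simp [hf]
      · simp [hf]

theorem stmt_19 (Q : MvPolynomial (Fin 2) ℝ) (r : ℝ) (hr : 0 < r) (κ : ℝ → ℝ)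
    (hreg : ∀ s t : ℝ, 1 - r * κ s * Real.cos t ≠ 0) :
    (∀ s t : ℝ,
        eval ![κ s * Real.cos t / (r * κ s * Real.cos t - 1), 1 / r] Q = 0) ↔
      ((X 1 - C (1 / r)) ∣ Q ∨ ((∀ s, κ s = 0) ∧ eval ![0, 1 / r] Q = 0)) := by
  constructor
  · intro H
    by_cases hκ : ∀ s, κ s = 0
    · right
      refine ⟨hκ, ?_⟩
      have h := H 0 0
      simpa [hκ 0] using h
    · left
      push_neg at hκ
      obtain ⟨s₀, hc⟩ := hκ
      set c := κ s₀ with hcdef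
      have hden : ∀ u ∈ Set.Icc (-1:ℝ) 1, r * c * u - 1 ≠ 0 := by
        intro u hu h0
        have h := hreg s₀ (Real.arccos u)
        rw [Real.cos_arccos hu.1 hu.2] at h
        apply h; linarith
      have hroot : ∀ u ∈ Set.Icc (-1:ℝ) 1,
          eval ![c * u / (r * c * u - 1), 1 / r] Q = 0 := by
        intro u hu
        have h := H s₀ (Real.arccos u)
        rwa [Real.cos_arccos hu.1 hu.2] at h
      set g : Polynomial ℝ :=
        MvPolynomial.aeval ![Polynomial.X, Polynomial.C (1/r)] Q with hg
      have heval : ∀ x : ℝ, Polynomial.eval x g = eval ![x, 1/r] Q := by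
        intro x
        have h := comp_aeval_apply (f := ![Polynomial.X, Polynomial.C (1/r)])
          (Polynomial.aeval x) Q
        rw [Polynomial.coe_aeval_eq_eval] at h
        rw [hg, h]
        have hv : (fun i => Polynomial.eval x (![Polynomial.X, Polynomial.C (1/r)] i))
            = ![x, 1/r] := by
          funext i; fin_cases i <;> simp
        rw [hv, ← coe_aeval_eq_eval]
        rfl
      have hginf : Set.Infinite { x : ℝ | g.IsRoot x } := by
        have hinj : Set.InjOn (fun u => c * u / (r * c * u - 1)) (Set.Icc (-1:ℝ) 1) := by
          intro u hu v hv huv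
          have du := hden u hu
          have dv := hden v hv
          simp only at huv
          rw [div_eq_div_iff du dv] at huv
          have : c * (u - v) = 0 := by ring_nf at huv ⊢; nlinarith [huv]
          have := mul_eq_zero.mp this
          rcases this with h | h
          · exact absurd h hc
          · linarith
        have himg : Set.Infinite ((fun u => c * u / (r * c * u - 1)) '' Set.Icc (-1:ℝ) 1) :=
          (Set.Icc_infinite (show (-1:ℝ) < 1 by norm_num)).image hinj
        refine himg.mono ?_
        rintro x ⟨u, hu, rfl⟩
        simp only [Set.mem_setOf_eq, Polynomial.IsRoot]
        rw [heval]
        exact hroot u hu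
      have hg0 : g = 0 := Polynomial.eq_zero_of_infinite_isRoot g hginf
      have hall : ∀ x : ℝ, eval ![x, 1/r] Q = 0 := by
        intro x
        rw [← heval x, hg0, Polynomial.eval_zero]
      have hσ : aeval (![X 0, C (1/r)] : Fin 2 → MvPolynomial (Fin 2) ℝ) Q = 0 := by
        apply MvPolynomial.funext
        intro v
        have h := comp_aeval_apply (f := (![X 0, C (1/r)] : Fin 2 → MvPolynomial (Fin 2) ℝ))
          (aeval v : MvPolynomial (Fin 2) ℝ →ₐ[ℝ] ℝ) Q
        have hv : (fun i => aeval v ((![X 0, C (1/r)] : Fin 2 → MvPolynomial (Fin 2) ℝ) i))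
            = ![v 0, 1/r] := by
          funext i; fin_cases i <;> simp
        rw [hv] at h
        show (aeval v : MvPolynomial (Fin 2) ℝ →ₐ[ℝ] ℝ) _ = eval v 0
        rw [h, map_zero]
        show eval ![v 0, 1/r] Q = 0
        exact hall (v 0)
      have := key_dvd (1/r) Q
      rw [hσ, sub_zero] at this
      exact this
  · rintro (⟨R, hR⟩ | ⟨hκ, h0⟩) s t
    · rw [hR, map_mul]
      have : eval ![κ s * Real.cos t / (r * κ s * Real.cos t - 1), 1 / r]
          (X 1 - C (1/r)) = 0 := by simp
      rw [map_sub] at this ⊢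
      simp_all
    · rw [hκ s]
      simpa using h0
end
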